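/- arXiv:2401.09110 — 3 statements merged into one kernel-verified Lean document; each statement's English description precedes it below -/
import Mathlib

section
/- The set of strings ω such that releasing the events of ω in order from the initial state τ_0 of an S-builder leads to the ending state T_e = (ε,...,ε) is exactly the set of TO-sequences TO(τ_0) = {ω ∈ Σ_I* | ∀i: P_i(ω) = τ_0^(i)}. -/
/-- The natural projection `P_i : Σ* → Σ_i*` keeping symbols in `Σ_i` and erasing others. -/
def natProj {α : Type*} [DecidableEq α] (Si : Finset α) (s : List α) : List α :=
  s.filter (· ∈ Si)

/-- The event release transition of an S-builder. -/
def SRel {α : Type*} [DecidableEq α] {m : ℕ} (Ss : Fin m → Finset α)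
    (τ : Fin m → List α) (σ : α) (τ' : Fin m → List α) : Prop :=
  (∃ i, σ ∈ Ss i) ∧ ∀ i, (σ ∈ Ss i → τ i = σ :: τ' i) ∧ (σ ∉ Ss i → τ' i = τ i)

/-- A path of releases from a state, labelled by a string of events. -/
def SRun {α : Type*} [DecidableEq α] {m : ℕ} (Ss : Fin m → Finset α) :
    (Fin m → List α) → List α → (Fin m → List α) → Prop
  | τ, [], τ'' => τ'' = τ
  | τ, σ :: w, τ'' => ∃ τ', SRel Ss τ σ τ' ∧ SRun Ss τ' w τ''

lemma SRun_iff_aux {α : Type*} [DecidableEq α] {m : ℕ} (Ss : Fin m → Finset α) :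
    ∀ (ω : List α) (τ : Fin m → List α),
      SRun Ss τ ω (fun _ => []) ↔
      (∀ a ∈ ω, ∃ i, a ∈ Ss i) ∧ ∀ i, natProj (Ss i) ω = τ i := by
  intro ω
  induction ω with
  | nil =>
    intro τ
    simp only [SRun, natProj, List.filter_nil, List.not_mem_nil]
    constructor
    · intro h
      exact ⟨by simp, fun i => congrFun h i⟩
    · intro ⟨_, h⟩
      funext i; simpa [natProj] using h i
  | cons σ w ih =>
    intro τ
    constructor
    · rintro ⟨τ', ⟨⟨j, hj⟩, hrel⟩, hrun⟩
      obtain ⟨hall, hproj⟩ := (ih τ').mp hrun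
      refine ⟨?_, ?_⟩
      · intro a ha
        rcases List.mem_cons.mp ha with rfl | ha
        · exact ⟨j, hj⟩
        · exact hall a ha
      · intro i
        by_cases h : σ ∈ Ss i
        · rw [(hrel i).1 h]
          simpa [natProj, List.filter_cons, h] using hproj i
        · rw [← (hrel i).2 h]
          simpa [natProj, List.filter_cons, h] using hproj i
    · rintro ⟨hall, hproj⟩
      obtain ⟨j, hj⟩ := hall σ (by simp)
      refine ⟨fun i => if σ ∈ Ss i then (τ i).tail else τ i, ⟨⟨j, hj⟩, ?_⟩, ?_⟩
      · intro i
        constructor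
        · intro h
          have := hproj i
          simp only [natProj, List.filter_cons, h] at this
          simp at this
          simp [h, ← this]
        · intro h; simp [h]
      · rw [ih]
        refine ⟨fun a ha => hall a (by simp [ha]), fun i => ?_⟩
        have := hproj i
        by_cases h : σ ∈ Ss i
        · simp only [natProj, List.filter_cons, h] at this ⊢
          simp at this
          simp [h, ← this]
        · simp only [natProj, List.filter_cons, h] at this ⊢
          simp at this
          simp [h, this]

/-- the strings whose release from `τ0` reaches `T_e = (ε,…,ε)`
are exactly the TO-sequences `TO(τ0)`. -/
theorem SRun_eq_TO {α : Type*} [DecidableEq α] {m : ℕ} (Ss : Fin m → Finset α)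
    (τ0 : Fin m → List α) :
    {ω : List α | SRun Ss τ0 ω (fun _ => [])} =
    {ω : List α | (∀ a ∈ ω, ∃ i, a ∈ Ss i) ∧ ∀ i, natProj (Ss i) ω = τ0 i} := by
  ext ω
  exact SRun_iff_aux Ss ω τ0
end

section
/- For any marked string t^p ∈ L_m(B̃_g) of an E_gTS-builder leading from (τ_g, 0) to an ending state (T_e, c), the pair (t^p[1], c) formed from the sequence of second components together with the accumulated cost satisfies (t^p[1], c) ∈ R̄^{c_u}(t^p[0]), where t^p[0] is the sequence of first components. (Lemma 4.1.) -/
/-- The transition function `h̃_g` of an E_gTS-builder (conditions H1 and H2). -/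
def HStep {α : Type*} [DecidableEq α] {m : ℕ} (Ss : Fin m → Finset α)
    (R : Option α → Option α → ℕ∞) (cu : ℕ)
    (s : (Fin m → List α) × ℕ) (p : Option α × Option α)
    (s' : (Fin m → List α) × ℕ) : Prop :=
  p ≠ (none, none) ∧ (∀ σ, p.1 = some σ → ∃ i, σ ∈ Ss i) ∧
  ((p.2 = none ∧ s'.1 = s.1 ∧ ∃ k : ℕ, R p.1 none = k ∧ s'.2 = s.2 + k ∧ s'.2 ≤ cu) ∨
   (∃ σ, p.2 = some σ ∧ SRel Ss s.1 σ s'.1 ∧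
     ∃ k : ℕ, R p.1 (some σ) = k ∧ s'.2 = s.2 + k ∧ s'.2 ≤ cu))

/-- Paths of the E_gTS-builder, labelled by strings of event pairs. -/
def HRun {α : Type*} [DecidableEq α] {m : ℕ} (Ss : Fin m → Finset α)
    (R : Option α → Option α → ℕ∞) (cu : ℕ) :
    (Fin m → List α) × ℕ → List (Option α × Option α) → (Fin m → List α) × ℕ → Prop
  | s, [], s2 => s2 = s
  | s, p :: w, s2 => ∃ s1, HStep Ss R cu s p s1 ∧ HRun Ss R cu s1 w s2

/-- The error relation with cost (see paper, Section III). -/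
inductive Err {α : Type*} (R : Option α → Option α → ℕ∞) : List α → List α → ℕ → Prop
  | nil : Err R [] [] 0
  | ins {w w' : List α} {c : ℕ} (σ : α) (k : ℕ) (hk : R none (some σ) = k) :
      Err R w w' c → Err R w (σ :: w') (k + c)
  | del {w w' : List α} {c : ℕ} (σ : α) (k : ℕ) (hk : R (some σ) none = k) :
      Err R w w' c → Err R (σ :: w) w' (k + c)
  | rep {w w' : List α} {c : ℕ} (σ σ' : α) (k : ℕ) (hk : R (some σ) (some σ') = k) :
      Err R w w' c → Err R (σ :: w) (σ' :: w') (k + c)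

theorem HRun_aux {α : Type*} [DecidableEq α] {m : ℕ} (Ss : Fin m → Finset α)
    (R : Option α → Option α → ℕ∞) (cu : ℕ) :
    ∀ (w : List (Option α × Option α)) (τ : Fin m → List α) (c0 : ℕ)
      (τ' : Fin m → List α) (c : ℕ), HRun Ss R cu (τ, c0) w (τ', c) →
      ∃ d, c = c0 + d ∧ Err R (w.filterMap Prod.fst) (w.filterMap Prod.snd) d ∧
        ((w = [] ∧ c = c0) ∨ c ≤ cu) := by
  intro w
  induction w with
  | nil =>
    intro τ c0 τ' c h
    have h' : (τ', c) = (τ, c0) := h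
    obtain ⟨h1, h2⟩ := Prod.mk.injEq .. ▸ h'
    exact ⟨0, by omega, by simpa [h2] using Err.nil, Or.inl ⟨rfl, h2⟩⟩
  | cons p w ih =>
    rintro τ c0 τ' c ⟨⟨τ1, c1⟩, ⟨hne, _, hstep⟩, hrun⟩
    obtain ⟨d, hd, herr, hle⟩ := ih τ1 c1 τ' c hrun
    have hcu : c1 ≤ cu → c ≤ cu := by
      rcases hle with ⟨_, h⟩ | h
      · omega
      · exact fun _ => h
    rcases hstep with ⟨h2, h1, k, hk, hc1, hcub⟩ | ⟨σ, h2, _, k, hk, hc1, hcub⟩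
    · -- deletion: p.2 = none, p.1 = some σ
      obtain ⟨σ, hσ⟩ : ∃ σ, p.1 = some σ := by
        rcases hp : p.1 with _ | σ
        · exact absurd (Prod.ext hp h2) hne
        · exact ⟨σ, rfl⟩
      refine ⟨k + d, by omega, ?_, Or.inr (hcu (by omega))⟩
      have : p = (some σ, none) := Prod.ext hσ h2
      subst this
      simpa using Err.del σ k hk herr
    · -- p.2 = some σ
      rcases hp : p.1 with _ | σ'
      · refine ⟨k + d, by omega, ?_, Or.inr (hcu (by omega))⟩
        have : p = (none, some σ) := Prod.ext hp h2
        subst this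
        simpa using Err.ins σ k hk herr
      · refine ⟨k + d, by omega, ?_, Or.inr (hcu (by omega))⟩
        have : p = (some σ', some σ) := Prod.ext hp h2
        subst this
        simpa using Err.rep σ' σ k hk herr

/-- Lemma 4.1: for any marked string `t^p` of the E_gTS-builder driving
`(τ_g, 0)` to an ending state `(T_e, c)`, the string of second components is a
cost-`c` erroneous version of the string of first components, with `c ≤ c_u`:
`(t^p[1], c) ∈ R̄^{c_u}(t^p[0])`. -/
theorem HRun_marked_err {α : Type*} [DecidableEq α] {m : ℕ} (Ss : Fin m → Finset α)
    (R : Option α → Option α → ℕ∞) (cu : ℕ) (τg : Fin m → List α)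
    (w : List (Option α × Option α)) (c : ℕ)
    (h : HRun Ss R cu (τg, 0) w ((fun _ => []), c)) :
    Err R (w.filterMap Prod.fst) (w.filterMap Prod.snd) c ∧ c ≤ cu := by
  obtain ⟨d, hd, herr, hle⟩ := HRun_aux Ss R cu w τg 0 _ c h
  refine ⟨by simpa [hd] using herr, ?_⟩
  rcases hle with ⟨_, h0⟩ | h0 <;> omega
end

section
/- The set of global-error-tolerant TO-sequences is characterized by the marked language of the E_gTS-builder: TO_g^{c_u}(τ_g) = {(t^p[0], c) | ∃ t^p ∈ L_m(B̃_g) with h̃_g((τ_g,0), t^p) = (T_e, c)}, where TO_g^{c_u}(τ_g) = {(ω, c) | ∃ ω_r ∈ TO(τ_g) with (ω_r, c) ∈ R̄^{c_u}(ω)}. (Lemma 4.2.) -/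
section

variable {α : Type*} {R : Option α → Option α → ℕ∞}

lemma filterMap_fst_cons {β : Type*} (p : Option α × β) (w : List (Option α × β)) :
    (p :: w).filterMap Prod.fst = p.1.toList ++ w.filterMap Prod.fst := by
  rcases p with ⟨_ | a, b⟩ <;> rfl

lemma Err.option_cons {o o' : Option α} (hne : (o, o') ≠ (none, none)) {k : ℕ}
    (hk : R o o' = k) {w w' : List α} {c : ℕ} (h : Err R w w' c) :
    Err R (o.toList ++ w) (o'.toList ++ w') (k + c) := by
  rcases o with _ | σ <;> rcases o' with _ | σ'
  · exact absurd rfl hne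
  · exact h.ins σ' k hk
  · exact h.del σ k hk
  · exact h.rep σ σ' k hk

end

section Builder

variable {α : Type*} [DecidableEq α] {m : ℕ} {Ss : Fin m → Finset α}
  {R : Option α → Option α → ℕ∞} {cu : ℕ}

lemma natProj_cons (Si : Finset α) (σ : α) (s : List α) :
    natProj Si (σ :: s) = if σ ∈ Si then σ :: natProj Si s else natProj Si s := by
  simp [natProj, List.filter_cons]

lemma sRel_natProj_cons {σ : α} (hσ : ∃ i, σ ∈ Ss i) (ω : List α) :
    SRel Ss (fun i => natProj (Ss i) (σ :: ω)) σ (fun i => natProj (Ss i) ω) :=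
  ⟨hσ, fun i => ⟨fun h => by simp [natProj_cons, h], fun h => by simp [natProj_cons, h]⟩⟩

lemma natProj_cons_of_sRel {τ τ' : Fin m → List α} {σ : α} (h : SRel Ss τ σ τ')
    {ω : List α} (hω : ∀ i, natProj (Ss i) ω = τ' i) (i : Fin m) :
    natProj (Ss i) (σ :: ω) = τ i := by
  by_cases hσ : σ ∈ Ss i
  · rw [natProj_cons, if_pos hσ, hω, (h.2 i).1 hσ]
  · rw [natProj_cons, if_neg hσ, hω, (h.2 i).2 hσ]

lemma hStep_natProj {o o' : Option α} (hne : (o, o') ≠ (none, none))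
    (ho : ∀ a ∈ o.toList, ∃ i, a ∈ Ss i) (ho' : ∀ a ∈ o'.toList, ∃ i, a ∈ Ss i)
    {k : ℕ} (hk : R o o' = k) {c₀ : ℕ} (hc : c₀ + k ≤ cu) (ω : List α) :
    HStep Ss R cu ((fun i => natProj (Ss i) (o'.toList ++ ω)), c₀) (o, o')
      ((fun i => natProj (Ss i) ω), c₀ + k) := by
  refine ⟨hne, fun σ hσ => ho σ (by simp [show o = some σ from hσ]), ?_⟩
  rcases o' with _ | σ
  · exact Or.inl ⟨rfl, rfl, k, hk, rfl, hc⟩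
  · exact Or.inr ⟨σ, rfl, sRel_natProj_cons (ho' σ (by simp)) ω, k, hk, rfl, hc⟩

namespace HStep

variable {s s' : (Fin m → List α) × ℕ} {p : Option α × Option α}

lemma exists_cost (h : HStep Ss R cu s p s') : ∃ k : ℕ, R p.1 p.2 = k ∧ s'.2 = s.2 + k := by
  rcases h.2.2 with ⟨hp, -, k, hk, hs, -⟩ | ⟨σ, hp, -, k, hk, hs, -⟩ <;> exact ⟨k, hp ▸ hk, hs⟩

lemma snd_le (h : HStep Ss R cu s p s') : s'.2 ≤ cu := by
  rcases h.2.2 with ⟨-, -, -, -, -, h⟩ | ⟨-, -, -, -, -, -, h⟩ <;> exact h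

lemma mem_snd (h : HStep Ss R cu s p s') : ∀ a ∈ p.2.toList, ∃ i, a ∈ Ss i := by
  rcases h.2.2 with ⟨hp, -⟩ | ⟨σ, hp, hσ, -⟩ <;> simp [hp]
  exact hσ.1

lemma natProj_append (h : HStep Ss R cu s p s') {ω : List α}
    (hω : ∀ i, natProj (Ss i) ω = s'.1 i) (i : Fin m) :
    natProj (Ss i) (p.2.toList ++ ω) = s.1 i := by
  rcases h.2.2 with ⟨hp, hτ, -⟩ | ⟨σ, hp, hσ, -⟩ <;> rw [hp]
  · exact (hω i).trans (congrFun hτ i)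
  · exact natProj_cons_of_sRel hσ hω i

end HStep

lemma HRun.snd_le : ∀ {s s' : (Fin m → List α) × ℕ} {w : List (Option α × Option α)},
    HRun Ss R cu s w s' → s.2 ≤ cu → s'.2 ≤ cu
  | _, _, [], h, hs => h ▸ hs
  | _, _, _ :: _, ⟨_, hstep, hrun⟩, _ => hrun.snd_le hstep.snd_le

lemma exists_hRun_of_err {ω ωr : List α} {c : ℕ} (herr : Err R ω ωr c)
    (hω : ∀ a ∈ ω, ∃ i, a ∈ Ss i) (hωr : ∀ a ∈ ωr, ∃ i, a ∈ Ss i) (c₀ : ℕ)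
    (hc : c₀ + c ≤ cu) :
    ∃ w, HRun Ss R cu ((fun i => natProj (Ss i) ωr), c₀) w ((fun _ => []), c₀ + c) ∧
      ω = w.filterMap Prod.fst := by
  induction herr generalizing c₀ with
  | nil => exact ⟨[], rfl, rfl⟩
  | @ins w w' c σ k hk _ ih =>
    rw [List.forall_mem_cons] at hωr
    obtain ⟨v, hrun, rfl⟩ := ih hω hωr.2 (c₀ + k) (by omega)
    exact ⟨(none, some σ) :: v, ⟨_, hStep_natProj (by simp) (by simp) (by simpa using hωr.1)
      hk (by omega) w', by rwa [← Nat.add_assoc]⟩, rfl⟩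
  | @del w w' c σ k hk _ ih =>
    rw [List.forall_mem_cons] at hω
    obtain ⟨v, hrun, rfl⟩ := ih hω.2 hωr (c₀ + k) (by omega)
    exact ⟨(some σ, none) :: v, ⟨_, hStep_natProj (by simp) (by simpa using hω.1) (by simp)
      hk (by omega) w', by rwa [← Nat.add_assoc]⟩, rfl⟩
  | @rep w w' c σ σ' k hk _ ih =>
    rw [List.forall_mem_cons] at hω hωr
    obtain ⟨v, hrun, rfl⟩ := ih hω.2 hωr.2 (c₀ + k) (by omega)
    exact ⟨(some σ, some σ') :: v, ⟨_, hStep_natProj (by simp) (by simpa using hω.1)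
      (by simpa using hωr.1) hk (by omega) w', by rwa [← Nat.add_assoc]⟩, rfl⟩

lemma err_of_hRun : ∀ (w : List (Option α × Option α)) (s : (Fin m → List α) × ℕ) (c : ℕ),
    HRun Ss R cu s w ((fun _ => []), c) →
    ∃ ωr c', Err R (w.filterMap Prod.fst) ωr c' ∧ c = s.2 + c' ∧
      (∀ a ∈ w.filterMap Prod.fst, ∃ i, a ∈ Ss i) ∧ (∀ a ∈ ωr, ∃ i, a ∈ Ss i) ∧
      ∀ i, natProj (Ss i) ωr = s.1 i
  | [], s, c, hrun => by
    subst hrun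
    exact ⟨[], 0, .nil, rfl, by simp, by simp, fun _ => rfl⟩
  | p :: w, s, c, ⟨s₁, hstep, hrun⟩ => by
    obtain ⟨ωr, c', herr, rfl, hmem, hmemr, hproj⟩ := err_of_hRun w s₁ c hrun
    obtain ⟨k, hk, hs₁⟩ := hstep.exists_cost
    refine ⟨p.2.toList ++ ωr, k + c', filterMap_fst_cons p w ▸ herr.option_cons hstep.1 hk,
      by omega, ?_, ?_, hstep.natProj_append hproj⟩
    · rw [filterMap_fst_cons]
      exact List.forall_mem_append.2 ⟨fun a ha => hstep.2.1 a (by simpa using ha), hmem⟩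
    · exact List.forall_mem_append.2 ⟨hstep.mem_snd, hmemr⟩

end Builder

/-- Lemma 4.2: the set `TO_g^{c_u}(τ_g)` of global-error-tolerant
TO-sequences with costs equals the set of pairs `(t^p[0], c)` obtained from marked
strings of the E_gTS-builder driving `(τ_g, 0)` to `(T_e, c)`. -/
theorem GETO_eq_marked {α : Type*} [DecidableEq α] {m : ℕ} (Ss : Fin m → Finset α)
    (R : Option α → Option α → ℕ∞) (cu : ℕ) (τg : Fin m → List α) :
    {p : List α × ℕ | (∀ a ∈ p.1, ∃ i, a ∈ Ss i) ∧ p.2 ≤ cu ∧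
      ∃ ωr : List α, (∀ a ∈ ωr, ∃ i, a ∈ Ss i) ∧ (∀ i, natProj (Ss i) ωr = τg i) ∧
        Err R p.1 ωr p.2} =
    {p : List α × ℕ | ∃ w : List (Option α × Option α),
      HRun Ss R cu (τg, 0) w ((fun _ => []), p.2) ∧ p.1 = w.filterMap Prod.fst} := by
  ext ⟨ω, c⟩
  simp only [Set.mem_ofPred_eq]
  constructor
  · rintro ⟨hω, hc, ωr, hωr, hproj, herr⟩
    obtain ⟨w, hrun, rfl⟩ := exists_hRun_of_err herr hω hωr 0 (by omega : 0 + c ≤ cu)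
    rw [funext hproj, zero_add] at hrun
    exact ⟨w, hrun, rfl⟩
  · rintro ⟨w, hrun, rfl⟩
    obtain ⟨ωr, c', herr, hc, hmem, hmemr, hproj⟩ := err_of_hRun w _ c hrun
    obtain rfl : c = c' := by simpa using hc
    exact ⟨hmem, hrun.snd_le (Nat.zero_le cu), ωr, hmemr, hproj, herr⟩
end
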